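/- arXiv:1503.06014 — 6 statements merged into one kernel-verified Lean document; each statement's English description precedes it below -/
import Mathlib

section
/- If A is an n×n real matrix with all eigenvalues in the open unit disc, (A,B) is reachable (i.e., the block matrix [B, AB, ..., A^{n-1}B] has rank n), and P satisfies the discrete Lyapunov equation P = A P Aᵀ + B Bᵀ, then P is positive definite. -/
/-!
Iterating `P = A P Aᵀ + B Bᵀ` gives `P = ∑_{k<m} Aᵏ B Bᵀ (Aᵀ)ᵏ + Aᵐ P (Aᵀ)ᵐ`
for every `m`. By Gelfand's formula `Aᵐ → 0`, so `P` is the limit of the partial sums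
and hence positive semidefinite. For `m = n` the partial sum is `R Rᵀ`, with `R` the
reachability matrix; it is positive definite because `R` has rank `n`, and adding the
positive semidefinite `Aⁿ P (Aᵀ)ⁿ` keeps it so.
-/

open Filter Topology Matrix
open scoped ComplexOrder

section PowersTendstoZero

variable {A : Type*} [NormedRing A] [NormedAlgebra ℂ A] [CompleteSpace A]

theorem tendsto_pow_atTop_nhds_zero_of_spectralRadius_lt_one {a : A}
    (h : spectralRadius ℂ a < 1) : Tendsto (a ^ ·) atTop (𝓝 0) := by
  obtain ⟨r, hρr, hr1⟩ := ENNReal.lt_iff_exists_nnreal_btwn.mp h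
  have hgelfand := spectrum.pow_nnnorm_pow_one_div_tendsto_nhds_spectralRadius a
  have hpow : ∀ᶠ m : ℕ in atTop, ‖a ^ m‖₊ ≤ r ^ m := by
    filter_upwards [hgelfand.eventually_lt_const hρr, eventually_gt_atTop 0] with m hm hm0
    rw [one_div, ENNReal.rpow_inv_lt_iff (by positivity), ENNReal.rpow_natCast] at hm
    exact_mod_cast hm.le
  refine squeeze_zero_norm' ?_ (tendsto_pow_atTop_nhds_zero_of_lt_one r.2 (by exact_mod_cast hr1))
  filter_upwards [hpow] with m hm
  exact_mod_cast hm

theorem tendsto_pow_atTop_nhds_zero_of_forall_norm_lt_one {a : A}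
    (h : ∀ μ ∈ spectrum ℂ a, ‖μ‖ < 1) : Tendsto (a ^ ·) atTop (𝓝 0) := by
  cases subsingleton_or_nontrivial A with
  | inl _ => exact tendsto_const_nhds.congr fun _ => Subsingleton.elim _ _
  | inr _ =>
    refine tendsto_pow_atTop_nhds_zero_of_spectralRadius_lt_one ?_
    simpa using spectrum.spectralRadius_lt_of_forall_lt a (r := 1) fun μ hμ => by
      exact_mod_cast h μ hμ

end PowersTendstoZero

theorem Matrix.tendsto_pow_atTop_nhds_zero_of_forall_mem_spectrum_map {n : Type*} [Fintype n]
    [DecidableEq n] {A : Matrix n n ℝ}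
    (hA : ∀ μ ∈ spectrum ℂ (A.map (algebraMap ℝ ℂ)), ‖μ‖ < 1) :
    Tendsto (A ^ ·) atTop (𝓝 0) := by
  have hC : Tendsto ((A.map (algebraMap ℝ ℂ)) ^ ·) atTop (𝓝 0) := by
    -- the L² operator norm makes complex matrices a Banach algebra with the entrywise topology
    open scoped Matrix.Norms.L2Operator in
    exact tendsto_pow_atTop_nhds_zero_of_forall_norm_lt_one hA
  have hre (m : ℕ) : A ^ m = ((A.map (algebraMap ℝ ℂ)) ^ m).map Complex.re := by
    rw [← Matrix.map_pow]
    ext i j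
    simp
  simpa [hre, Function.comp_def] using
    ((continuous_id.matrix_map Complex.continuous_re).tendsto 0).comp hC

section LyapunovIteration

variable {R : Type*}

theorem eq_sum_range_add_pow_of_eq_mul_mul_add [Semiring R] {a c p q : R}
    (hp : p = a * p * c + q) (m : ℕ) :
    p = ∑ k ∈ Finset.range m, a ^ k * q * c ^ k + a ^ m * p * c ^ m := by
  induction m with
  | zero => simp
  | succ m ih =>
    calc p = ∑ k ∈ Finset.range m, a ^ k * q * c ^ k + a ^ m * (a * p * c + q) * c ^ m := by
          rw [← hp]; exact ih
      _ = _ := by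
          rw [Finset.sum_range_succ, pow_succ a, pow_succ' c]
          simp only [mul_add, add_mul, mul_assoc]
          abel

theorem tendsto_sum_range_of_eq_mul_mul_add [Ring R] [TopologicalSpace R] [IsTopologicalRing R]
    {a c p q : R} (hp : p = a * p * c + q) (ha : Tendsto (a ^ ·) atTop (𝓝 0))
    (hc : Tendsto (c ^ ·) atTop (𝓝 0)) :
    Tendsto (fun m => ∑ k ∈ Finset.range m, a ^ k * q * c ^ k) atTop (𝓝 p) := by
  have hrem : Tendsto (fun m : ℕ => a ^ m * p * c ^ m) atTop (𝓝 0) := by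
    simpa using (ha.mul_const p).mul hc
  have hsum (m : ℕ) : ∑ k ∈ Finset.range m, a ^ k * q * c ^ k = p - a ^ m * p * c ^ m :=
    eq_sub_of_add_eq (eq_sum_range_add_pow_of_eq_mul_mul_add hp m).symm
  simpa [hsum] using tendsto_const_nhds.sub hrem

end LyapunovIteration

theorem Matrix.isClosed_setOf_posSemidef {n 𝕜 : Type*} [Fintype n] [RCLike 𝕜] :
    IsClosed {M : Matrix n n 𝕜 | M.PosSemidef} := by
  simp_rw [posSemidef_iff_dotProduct_mulVec, Set.ofPred_and, Set.ofPred_forall]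
  refine (isClosed_eq continuous_id.matrix_conjTranspose continuous_id).inter
    (isClosed_iInter fun x => isClosed_le continuous_const ?_)
  fun_prop

theorem Matrix.isUnit_of_rank_eq_card {n K : Type*} [Fintype n] [DecidableEq n] [Field K]
    {M : Matrix n n K} (h : M.rank = Fintype.card n) : IsUnit M :=
  mulVec_surjective_iff_isUnit.mp <| LinearMap.range_eq_top.mp <|
    Submodule.eq_top_of_finrank_eq <| h.trans (Module.finrank_fintype_fun_eq_card K).symm

section Reachability

variable {n p R : Type*} [Fintype n] [DecidableEq n] [Fintype p]

def Matrix.reachabilityMatrix [Semiring R] (A : Matrix n n R) (B : Matrix n p R) (N : ℕ) :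
    Matrix n (Fin N × p) R :=
  of fun i kj => (A ^ (kj.1 : ℕ) * B) i kj.2

theorem Matrix.reachabilityMatrix_mul_conjTranspose [CommSemiring R] [StarRing R]
    (A : Matrix n n R) (B : Matrix n p R) (N : ℕ) :
    reachabilityMatrix A B N * (reachabilityMatrix A B N)ᴴ =
      ∑ k ∈ Finset.range N, A ^ k * (B * Bᴴ) * Aᴴ ^ k := by
  have hterm (k : ℕ) : A ^ k * (B * Bᴴ) * Aᴴ ^ k = A ^ k * B * (A ^ k * B)ᴴ := by
    rw [conjTranspose_mul, conjTranspose_pow, Matrix.mul_assoc, Matrix.mul_assoc,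
      Matrix.mul_assoc]
  ext i j
  rw [mul_apply, Fintype.sum_prod_type, sum_apply,
    ← Fin.sum_univ_eq_sum_range (fun k => (A ^ k * (B * Bᴴ) * Aᴴ ^ k) i j)]
  refine Finset.sum_congr rfl fun k _ => ?_
  rw [hterm, mul_apply]
  rfl

end Reachability

section Lyapunov

variable {n p 𝕜 : Type*} [Fintype n] [DecidableEq n] [Fintype p] [RCLike 𝕜]

theorem Matrix.posSemidef_of_eq_mul_mul_conjTranspose_add {A P Q : Matrix n n 𝕜}
    (hA : Tendsto (A ^ ·) atTop (𝓝 0)) (hQ : Q.PosSemidef) (hP : P = A * P * Aᴴ + Q) :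
    P.PosSemidef := by
  have hAH : Tendsto (Aᴴ ^ ·) atTop (𝓝 0) := by
    simpa [← conjTranspose_pow, Function.comp_def] using
      ((continuous_id.matrix_conjTranspose).tendsto 0).comp hA
  refine isClosed_setOf_posSemidef.mem_of_tendsto
    (tendsto_sum_range_of_eq_mul_mul_add hP hA hAH) (Eventually.of_forall fun m => ?_)
  refine posSemidef_sum _ fun k _ => ?_
  rw [← conjTranspose_pow]
  exact hQ.mul_mul_conjTranspose_same _

theorem Matrix.posDef_of_eq_mul_mul_conjTranspose_add {A P : Matrix n n 𝕜} {B : Matrix n p 𝕜}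
    {N : ℕ} (hA : Tendsto (A ^ ·) atTop (𝓝 0))
    (hreach : (reachabilityMatrix A B N).rank = Fintype.card n)
    (hP : P = A * P * Aᴴ + B * Bᴴ) : P.PosDef := by
  have hPsd : P.PosSemidef :=
    posSemidef_of_eq_mul_mul_conjTranspose_add hA (posSemidef_self_mul_conjTranspose B) hP
  have hgram : (reachabilityMatrix A B N * (reachabilityMatrix A B N)ᴴ).PosDef :=
    (posSemidef_self_mul_conjTranspose _).posDef_iff_isUnit.mpr <|
      isUnit_of_rank_eq_card <| (rank_self_mul_conjTranspose _).trans hreach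
  rw [eq_sum_range_add_pow_of_eq_mul_mul_add hP N, ← reachabilityMatrix_mul_conjTranspose,
    ← conjTranspose_pow]
  exact hgram.add_posSemidef (hPsd.mul_mul_conjTranspose_same _)

end Lyapunov

theorem stmt_0 {n p : ℕ} (A : Matrix (Fin n) (Fin n) ℝ) (B : Matrix (Fin n) (Fin p) ℝ)
    (hA : ∀ μ ∈ spectrum ℂ (A.map (algebraMap ℝ ℂ)), ‖μ‖ < 1)
    (hreach : (Matrix.of fun (i : Fin n) (kj : Fin n × Fin p) =>
      (A ^ (kj.1 : ℕ) * B) i kj.2).rank = n)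
    (P : Matrix (Fin n) (Fin n) ℝ)
    (hP : P = A * P * Aᵀ + B * Bᵀ) : P.PosDef := by
  rw [← conjTranspose_eq_transpose_of_trivial, ← conjTranspose_eq_transpose_of_trivial] at hP
  exact posDef_of_eq_mul_mul_conjTranspose_add
    (tendsto_pow_atTop_nhds_zero_of_forall_mem_spectrum_map hA) (N := n)
    (hreach.trans (Fintype.card_fin n).symm) hP
end

section
/- If F ∈ ℝ^{n×n} and G ∈ ℝ^{n×p} satisfy F Fᵀ + G Gᵀ = I_n, then there exist H ∈ ℝ^{p×n} and J ∈ ℝ^{p×p} such that the (n+p)×(n+p) block matrix U = [[F, G], [H, J]] is orthogonal, i.e., U Uᵀ = Uᵀ U = I_{n+p}. -/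
/-! The hypothesis says that the rows of `[F G]` are orthonormal in `ℝⁿ⁺ᵖ`. Extending them to an
orthonormal basis and using the new vectors as the remaining rows gives a matrix whose rows are
orthonormal, i.e. `U Uᵀ = 1`; for square matrices this forces `Uᵀ U = 1` as well. -/

open Matrix

section RCLike

variable {𝕜 : Type*} [RCLike 𝕜]

theorem Matrix.mul_conjTranspose_eq_one_iff_orthonormal_rows {m n : Type*} [Fintype n]
    [DecidableEq m] (A : Matrix m n 𝕜) :
    A * Aᴴ = 1 ↔ Orthonormal 𝕜 (fun i ↦ WithLp.toLp 2 (A i) : m → EuclideanSpace 𝕜 n) := by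
  rw [orthonormal_iff_ite, ← Matrix.ext_iff, forall_comm]
  refine forall₂_congr fun j i ↦ ?_
  simp only [EuclideanSpace.inner_toLp_toLp, one_apply, eq_comm (a := j)]
  rfl

theorem OrthonormalBasis.of_ofLp_mem_unitaryGroup {ι : Type*} [Fintype ι] [DecidableEq ι]
    (b : OrthonormalBasis ι 𝕜 (EuclideanSpace 𝕜 ι)) :
    Matrix.of (fun i ↦ (b i).ofLp) ∈ unitaryGroup ι 𝕜 := by
  rw [mem_unitaryGroup_iff, star_eq_conjTranspose,
    mul_conjTranspose_eq_one_iff_orthonormal_rows]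
  exact b.orthonormal

theorem Matrix.exists_fromRows_mem_unitaryGroup {m k : Type*} [Fintype m] [Fintype k]
    [DecidableEq m] [DecidableEq k] (A : Matrix m (m ⊕ k) 𝕜) (hA : A * Aᴴ = 1) :
    ∃ B : Matrix k (m ⊕ k) 𝕜, fromRows A B ∈ unitaryGroup (m ⊕ k) 𝕜 := by
  set v : m ⊕ k → EuclideanSpace 𝕜 (m ⊕ k) := Sum.elim (fun i ↦ WithLp.toLp 2 (A i)) 0
  have hv : Orthonormal 𝕜 ((Set.range Sum.inl).domRestrict v) := by
    have hrestrict : (Set.range Sum.inl).domRestrict v =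
        (fun i ↦ WithLp.toLp 2 (A i)) ∘ (Equiv.ofInjective _ Sum.inl_injective).symm := by
      ext ⟨_, i, rfl⟩ : 1
      simp [v, Set.domRestrict]
    rw [hrestrict]
    exact ((mul_conjTranspose_eq_one_iff_orthonormal_rows A).mp hA).comp _ (Equiv.injective _)
  obtain ⟨b, hb⟩ := hv.exists_orthonormalBasis_extension_of_card_eq (by simp)
  refine ⟨Matrix.of fun j ↦ (b (Sum.inr j)).ofLp, ?_⟩
  convert b.of_ofLp_mem_unitaryGroup using 1
  ext (i | j) : 1
  · simp [hb (Sum.inl i) ⟨i, rfl⟩, v]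
  · rfl

theorem Matrix.exists_fromBlocks_mem_unitaryGroup {m k : Type*} [Fintype m] [Fintype k]
    [DecidableEq m] [DecidableEq k] (F : Matrix m m 𝕜) (G : Matrix m k 𝕜)
    (h : F * Fᴴ + G * Gᴴ = 1) :
    ∃ H J, fromBlocks F G H J ∈ unitaryGroup (m ⊕ k) 𝕜 := by
  obtain ⟨B, hB⟩ := exists_fromRows_mem_unitaryGroup (fromCols F G) (by
    rwa [conjTranspose_fromCols_eq_fromRows_conjTranspose, fromCols_mul_fromRows])
  refine ⟨B.toCols₁, B.toCols₂, ?_⟩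
  rwa [← fromRows_fromCols_eq_fromBlocks, fromCols_toCols]

end RCLike

theorem stmt_1 {n p : ℕ} (F : Matrix (Fin n) (Fin n) ℝ) (G : Matrix (Fin n) (Fin p) ℝ)
    (h : F * Fᵀ + G * Gᵀ = 1) :
    ∃ (H : Matrix (Fin p) (Fin n) ℝ) (J : Matrix (Fin p) (Fin p) ℝ),
      Matrix.fromBlocks F G H J * (Matrix.fromBlocks F G H J)ᵀ = 1 ∧
      (Matrix.fromBlocks F G H J)ᵀ * Matrix.fromBlocks F G H J = 1 := by
  simp only [← conjTranspose_eq_transpose_of_trivial] at h ⊢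
  obtain ⟨H, J, hU⟩ := exists_fromBlocks_mem_unitaryGroup F G h
  exact ⟨H, J, mem_unitaryGroup_iff.mp hU, mem_unitaryGroup_iff'.mp hU⟩
end

section
/- Let F ∈ ℝ^{n×n} and G ∈ ℝ^{n×p} satisfy the continuous Lyapunov identity F + Fᵀ + G Gᵀ = 0. Then the rational matrix function 𝐔(s) = I_p − Gᵀ (s I_n − F)^{-1} G satisfies 𝐔(s) 𝐔(−s)ᵀ = I_p for all complex s such that s I_n − F and −s I_n − Fᵀ are invertible. -/
open Matrix

theorem stmt_5 {n p : ℕ} (F : Matrix (Fin n) (Fin n) ℝ) (G : Matrix (Fin n) (Fin p) ℝ)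
    (hLyap : F + Fᵀ + G * Gᵀ = 0) (s : ℂ)
    (h1 : IsUnit (s • (1 : Matrix (Fin n) (Fin n) ℂ) - F.map (algebraMap ℝ ℂ)).det)
    (h2 : IsUnit ((-s) • (1 : Matrix (Fin n) (Fin n) ℂ) - (F.map (algebraMap ℝ ℂ))ᵀ).det) :
    ((1 : Matrix (Fin p) (Fin p) ℂ) - (G.map (algebraMap ℝ ℂ))ᵀ *
        (s • (1 : Matrix (Fin n) (Fin n) ℂ) - F.map (algebraMap ℝ ℂ))⁻¹ * G.map (algebraMap ℝ ℂ)) *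
    ((1 : Matrix (Fin p) (Fin p) ℂ) - (G.map (algebraMap ℝ ℂ))ᵀ *
        ((-s) • (1 : Matrix (Fin n) (Fin n) ℂ) - F.map (algebraMap ℝ ℂ))⁻¹ * G.map (algebraMap ℝ ℂ))ᵀ
      = 1 := by
  set Fc := F.map (algebraMap ℝ ℂ) with hFc
  set Gc := G.map (algebraMap ℝ ℂ) with hGc
  have hL : Fc + Fcᵀ + Gc * Gcᵀ = 0 := by
    rw [hFc, hGc, ← Matrix.transpose_map, ← Matrix.transpose_map, ← Matrix.map_mul,
      ← Matrix.map_add _ (fun a b => map_add _ a b), ← Matrix.map_add _ (fun a b => map_add _ a b), hLyap]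
    simp
  set A := s • (1 : Matrix (Fin n) (Fin n) ℂ) - Fc with hA
  set B := (-s) • (1 : Matrix (Fin n) (Fin n) ℂ) - Fcᵀ with hB
  have hBt : ((-s) • (1 : Matrix (Fin n) (Fin n) ℂ) - Fc)ᵀ = B := by
    simp [hB, transpose_sub, transpose_smul]
  have hGG : Gc * Gcᵀ = A + B := by
    have e1 : A + B = -(Fc + Fcᵀ) := by
      simp only [hA, hB, neg_smul]
      abel
    have e2 : Gc * Gcᵀ = -(Fc + Fcᵀ) := by
      linear_combination (norm := (simp only [neg_add_rev]; abel_nf)) hL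
    rw [e2, e1]
  have hAinv : A⁻¹ * A = 1 := Matrix.nonsing_inv_mul A h1
  have hBinv : B * B⁻¹ = 1 := Matrix.mul_nonsing_inv B h2
  have key : A⁻¹ * (Gc * Gcᵀ) * B⁻¹ = B⁻¹ + A⁻¹ := by
    rw [hGG, Matrix.mul_add, Matrix.add_mul, hAinv, Matrix.mul_assoc A⁻¹ B B⁻¹, hBinv,
      Matrix.one_mul, Matrix.mul_one]
  have htr : ((1 : Matrix (Fin p) (Fin p) ℂ) - Gcᵀ * ((-s) • (1 : Matrix (Fin n) (Fin n) ℂ) - Fc)⁻¹ * Gc)ᵀ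
      = 1 - Gcᵀ * B⁻¹ * Gc := by
    rw [transpose_sub, transpose_one, transpose_mul, transpose_mul, transpose_transpose,
      Matrix.transpose_nonsing_inv, hBt, ← Matrix.mul_assoc]
  rw [htr]
  set X := Gcᵀ * A⁻¹ * Gc with hX
  set Y := Gcᵀ * B⁻¹ * Gc with hY
  have hXY : X * Y = Y + X := by
    calc X * Y = Gcᵀ * (A⁻¹ * (Gc * Gcᵀ) * B⁻¹) * Gc := by
          simp only [hX, hY, Matrix.mul_assoc]
      _ = Gcᵀ * (B⁻¹ + A⁻¹) * Gc := by rw [key]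
      _ = Y + X := by rw [Matrix.mul_add, Matrix.add_mul]
  have expand : ((1 : Matrix (Fin p) (Fin p) ℂ) - X) * (1 - Y) = 1 - X - Y + X * Y := by
    simp only [Matrix.sub_mul, Matrix.mul_sub, Matrix.one_mul, Matrix.mul_one]
    abel
  rw [expand, hXY]
  abel
end

section
/- Let x, x₋, x̄₊ be centered square-integrable ℝⁿ-valued random vectors with E[x xᵀ] = P invertible, x̄ := P^{-1} x, P₋ := E[x₋ x₋ᵀ] and P̄₊ := E[x̄₊ x̄₊ᵀ] invertible, E[x x₋ᵀ] = P₋, E[x̄ x̄₊ᵀ] = P̄₊. Assume the conditional-orthogonality (commuting projections) property: for all a ∈ ℝⁿ, the projection of aᵀx₋ onto the span X₊ of the components of x̄₊ equals the projection onto X₊ of the projection of aᵀx₋ onto the span X of the components of x. Then E[x̄₊ x₋ᵀ] = P̄₊ P₋. -/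
/-!
The projection of `aᵀx₋` onto `X` is `bᵀx` with `b = P⁻¹ E[x x₋ᵀ] a = P⁻¹ P₋ a`. Two
random variables in `L²` have the same projection onto `X₊` iff they have the same
cross-covariance with `x̄₊` (the Gram matrix `P̄₊` being invertible), so the commuting
hypothesis reads `E[x̄₊ x₋ᵀ] a = E[x̄₊ xᵀ] P⁻¹ P₋ a`. Finally `E[x̄ x̄₊ᵀ] = P⁻¹ E[x x̄₊ᵀ] = P̄₊`
gives `E[x̄₊ xᵀ] = P̄₊ P`, since `P` and `P̄₊` are symmetric.
-/

open Matrix MeasureTheory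

/-- Cross-covariance matrix E[x yᵀ] of two (centered) random vectors. -/
noncomputable def cov {Ω : Type*} [MeasurableSpace Ω] (ℙ : Measure Ω) {n m : ℕ}
    (x : Ω → Fin n → ℝ) (y : Ω → Fin m → ℝ) : Matrix (Fin n) (Fin m) ℝ :=
  Matrix.of fun i j => ∫ ω, x ω i * y ω j ∂ℙ

/-- Orthogonal projection (in L²) of the scalar random variable `v` onto the span of the
components of the random vector `y`, expressed by the usual normal-equations formula
(valid when the Gram matrix `cov ℙ y y` is invertible). -/
noncomputable def projSpan {Ω : Type*} [MeasurableSpace Ω] (ℙ : Measure Ω) {m : ℕ}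
    (v : Ω → ℝ) (y : Ω → Fin m → ℝ) : Ω → ℝ :=
  fun ω => ((cov ℙ y y)⁻¹).mulVec (fun j => ∫ ω', v ω' * y ω' j ∂ℙ) ⬝ᵥ y ω

section Covariance

variable {Ω : Type*} [MeasurableSpace Ω] {ℙ : Measure Ω} {n m : ℕ}

lemma cov_transpose (y : Ω → Fin n → ℝ) (z : Ω → Fin m → ℝ) :
    (cov ℙ y z)ᵀ = cov ℙ z y := by
  ext i j
  simp only [cov, transpose_apply, of_apply, mul_comm]

variable {y : Ω → Fin n → ℝ} {z : Ω → Fin m → ℝ}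
  (hy : ∀ i, MemLp (fun ω => y ω i) 2 ℙ) (hz : ∀ j, MemLp (fun ω => z ω j) 2 ℙ)
include hy hz

lemma integral_dotProduct_mul (a : Fin n → ℝ) :
    (fun j => ∫ ω, (a ⬝ᵥ y ω) * z ω j ∂ℙ) = cov ℙ z y *ᵥ a := by
  ext j
  calc ∫ ω, (a ⬝ᵥ y ω) * z ω j ∂ℙ = ∑ i, a i * ∫ ω, y ω i * z ω j ∂ℙ := by
        have hint (i : Fin n) : Integrable (fun ω => a i * (y ω i * z ω j)) ℙ :=
          ((hy i).integrable_mul (hz j)).const_mul (a i)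
        simp only [dotProduct, Finset.sum_mul, mul_assoc]
        rw [integral_finsetSum _ fun i _ => hint i]
        simp only [integral_const_mul]
    _ = (cov ℙ z y *ᵥ a) j := by simp only [mulVec, dotProduct, cov, of_apply, mul_comm]

lemma cov_mulVec_left {k : ℕ} (A : Matrix (Fin k) (Fin n) ℝ) :
    cov ℙ (fun ω => A *ᵥ y ω) z = A * cov ℙ y z := by
  ext i j
  calc cov ℙ (fun ω => A *ᵥ y ω) z i j = (cov ℙ z y *ᵥ A i) j :=
        congrFun (integral_dotProduct_mul hy hz (A i)) j
    _ = (A * cov ℙ y z) i j := by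
        rw [← cov_transpose y z]
        simp only [mulVec, dotProduct, mul_apply, transpose_apply, mul_comm]

lemma projSpan_dotProduct (a : Fin n → ℝ) :
    projSpan ℙ (fun ω => a ⬝ᵥ y ω) z =
      fun ω => ((cov ℙ z z)⁻¹ *ᵥ (cov ℙ z y *ᵥ a)) ⬝ᵥ z ω := by
  unfold projSpan
  rw [integral_dotProduct_mul hy hz]

lemma cov_mulVec_eq_of_projSpan_ae_eq {k : ℕ} {w : Ω → Fin k → ℝ}
    (hw : ∀ i, MemLp (fun ω => w ω i) 2 ℙ) (hzz : IsUnit (cov ℙ z z).det) {a : Fin n → ℝ}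
    {b : Fin k → ℝ}
    (h : projSpan ℙ (fun ω => a ⬝ᵥ y ω) z =ᵐ[ℙ] projSpan ℙ (fun ω => b ⬝ᵥ w ω) z) :
    cov ℙ z y *ᵥ a = cov ℙ z w *ᵥ b := by
  rw [projSpan_dotProduct hy hz, projSpan_dotProduct hw hz] at h
  have hgram : cov ℙ z z *ᵥ ((cov ℙ z z)⁻¹ *ᵥ (cov ℙ z y *ᵥ a)) =
      cov ℙ z z *ᵥ ((cov ℙ z z)⁻¹ *ᵥ (cov ℙ z w *ᵥ b)) := by
    rw [← integral_dotProduct_mul hz hz, ← integral_dotProduct_mul hz hz]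
    funext j
    exact integral_congr_ae (h.mul (ae_eq_refl _))
  simpa only [mulVec_mulVec, mul_nonsing_inv_cancel_left _ _ hzz] using hgram

end Covariance

theorem stmt_9_general {Ω : Type*} [MeasurableSpace Ω] (ℙ : Measure Ω)
    {n : ℕ} (x xm xbp xbar : Ω → Fin n → ℝ)
    (hx2 : ∀ i, MemLp (fun ω => x ω i) 2 ℙ)
    (hxm2 : ∀ i, MemLp (fun ω => xm ω i) 2 ℙ)
    (hxbp2 : ∀ i, MemLp (fun ω => xbp ω i) 2 ℙ)
    (hPinv : IsUnit (cov ℙ x x).det)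
    (hxbar : xbar = fun ω => ((cov ℙ x x)⁻¹).mulVec (x ω))
    (hPbpinv : IsUnit (cov ℙ xbp xbp).det)
    (hcross1 : cov ℙ x xm = cov ℙ xm xm)
    (hcross2 : cov ℙ xbar xbp = cov ℙ xbp xbp)
    (hcomm : ∀ a : Fin n → ℝ,
      projSpan ℙ (fun ω => a ⬝ᵥ xm ω) xbp =ᵐ[ℙ]
      projSpan ℙ (projSpan ℙ (fun ω => a ⬝ᵥ xm ω) x) xbp) :
    cov ℙ xbp xm = cov ℙ xbp xbp * cov ℙ xm xm := by
  have hxbpx : cov ℙ xbp x = cov ℙ xbp xbp * cov ℙ x x := by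
    have h : (cov ℙ x x)⁻¹ * cov ℙ x xbp = cov ℙ xbp xbp := by
      rw [← cov_mulVec_left hx2 hxbp2, ← hxbar, hcross2]
    rw [← cov_transpose x xbp, ← mul_nonsing_inv_cancel_left _ (cov ℙ x xbp) hPinv, h,
      transpose_mul, cov_transpose, cov_transpose]
  refine ext_of_mulVec_single fun j => ?_
  have h := hcomm (Pi.single j 1)
  rw [projSpan_dotProduct hxm2 hx2, hcross1] at h
  rw [cov_mulVec_eq_of_projSpan_ae_eq hxm2 hxbp2 hx2 hPbpinv h, hxbpx, mulVec_mulVec,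
    mulVec_mulVec, mul_nonsing_inv_cancel_right _ _ hPinv]

theorem stmt_9 {Ω : Type*} [MeasurableSpace Ω] (ℙ : Measure Ω) [IsProbabilityMeasure ℙ]
    {n : ℕ} (x xm xbp xbar : Ω → Fin n → ℝ)
    (hx2 : ∀ i, MemLp (fun ω => x ω i) 2 ℙ)
    (hxm2 : ∀ i, MemLp (fun ω => xm ω i) 2 ℙ)
    (hxbp2 : ∀ i, MemLp (fun ω => xbp ω i) 2 ℙ)
    (hx0 : ∀ i, ∫ ω, x ω i ∂ℙ = 0)
    (hxm0 : ∀ i, ∫ ω, xm ω i ∂ℙ = 0)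
    (hxbp0 : ∀ i, ∫ ω, xbp ω i ∂ℙ = 0)
    (hPinv : IsUnit (cov ℙ x x).det)
    (hxbar : xbar = fun ω => ((cov ℙ x x)⁻¹).mulVec (x ω))
    (hPminv : IsUnit (cov ℙ xm xm).det)
    (hPbpinv : IsUnit (cov ℙ xbp xbp).det)
    (hcross1 : cov ℙ x xm = cov ℙ xm xm)
    (hcross2 : cov ℙ xbar xbp = cov ℙ xbp xbp)
    (hcomm : ∀ a : Fin n → ℝ,
      projSpan ℙ (fun ω => a ⬝ᵥ xm ω) xbp =ᵐ[ℙ]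
      projSpan ℙ (projSpan ℙ (fun ω => a ⬝ᵥ xm ω) x) xbp) :
    cov ℙ xbp xm = cov ℙ xbp xbp * cov ℙ xm xm :=
  stmt_9_general ℙ x xm xbp xbar hx2 hxm2 hxbp2 hPinv hxbar hPbpinv hcross1 hcross2 hcomm
end

section
/- Let P : [0,T] → ℝ^{n×n} be a continuously differentiable positive-definite matrix function solving Ṗ = A(t)P + P A(t)ᵀ + B(t)B(t)ᵀ. Define F(t) = P(t)^{-1/2} A(t) P(t)^{1/2} + R(t) and G(t) = P(t)^{-1/2} B(t), where R(t) = (d/dt P(t)^{-1/2}) P(t)^{1/2}. Then F(t) + F(t)ᵀ + G(t)G(t)ᵀ = 0 for all t. -/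
/-!
Write `Q = P^{-1/2} = S⁻¹`. Since `Q P Q = 1` for all `t`, the product rule gives
`Q' P Q + Q Ṗ Q + Q P Q' = 0`. With `P = S S` this reads
`R + Q A S + S Aᵀ Q + Q B Bᵀ Q + S Q' = 0`, and `S Q' = Rᵀ` because `S` and `Q'` are symmetric
(`Q` is symmetric for every `t`, hence so is its derivative).
-/

open Matrix

namespace Matrix

section EntrywiseDeriv

variable {𝕜 : Type*} [NontriviallyNormedField 𝕜] {l m n : Type*} {t : 𝕜}

theorem hasDerivAt_mul_apply [Fintype m] {M : 𝕜 → Matrix l m 𝕜} {N : 𝕜 → Matrix m n 𝕜}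
    {M' : Matrix l m 𝕜} {N' : Matrix m n 𝕜}
    (hM : ∀ i j, HasDerivAt (fun τ => M τ i j) (M' i j) t)
    (hN : ∀ i j, HasDerivAt (fun τ => N τ i j) (N' i j) t) (i : l) (k : n) :
    HasDerivAt (fun τ => (M τ * N τ) i k) ((M' * N t + M t * N') i k) t := by
  simp only [mul_apply, add_apply, ← Finset.sum_add_distrib]
  exact HasDerivAt.fun_sum fun j _ => (hM i j).mul (hN j k)

theorem eq_zero_of_hasDerivAt_apply_of_forall_eq {M : 𝕜 → Matrix m n 𝕜} {M' C : Matrix m n 𝕜}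
    (hconst : ∀ τ, M τ = C) (hM : ∀ i j, HasDerivAt (fun τ => M τ i j) (M' i j) t) :
    M' = 0 := by
  ext i j
  refine (hM i j).unique ?_
  simpa only [hconst, zero_apply] using hasDerivAt_const t (C i j)

theorem transpose_eq_of_hasDerivAt_apply {M : 𝕜 → Matrix n n 𝕜} {M' : Matrix n n 𝕜}
    (hsymm : ∀ τ, (M τ)ᵀ = M τ) (hM : ∀ i j, HasDerivAt (fun τ => M τ i j) (M' i j) t) :
    M'ᵀ = M' := by
  ext i j
  refine (hM j i).unique ?_
  simpa only [← transpose_apply (M _) i j, hsymm] using hM i j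

end EntrywiseDeriv

theorem add_transpose_add_mul_transpose_eq_zero {R : Type*} [CommRing R] {n p : Type*}
    [Fintype n] [Fintype p] [DecidableEq n] {S Q' A : Matrix n n R} {B : Matrix n p R}
    (hS : IsUnit S.det) (hSsymm : Sᵀ = S) (hQ'symm : Q'ᵀ = Q')
    (h : Q' * (S * S) * S⁻¹ + S⁻¹ * (A * (S * S) + S * S * Aᵀ + B * Bᵀ) * S⁻¹
      + S⁻¹ * (S * S) * Q' = 0) :
    S⁻¹ * A * S + Q' * S + (S⁻¹ * A * S + Q' * S)ᵀ + S⁻¹ * B * (S⁻¹ * B)ᵀ = 0 := by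
  simp only [add_mul, mul_add, Matrix.mul_assoc, mul_nonsing_inv _ hS, mul_one,
    nonsing_inv_mul_cancel_left _ _ hS] at h
  simp only [transpose_add, transpose_mul, transpose_nonsing_inv, hSsymm, hQ'symm,
    Matrix.mul_assoc]
  rw [← h]
  abel

end Matrix

theorem stmt_17 {n p : ℕ}
    (A : ℝ → Matrix (Fin n) (Fin n) ℝ) (B : ℝ → Matrix (Fin n) (Fin p) ℝ)
    (P S : ℝ → Matrix (Fin n) (Fin n) ℝ)
    (hSpos : ∀ t, (S t).PosDef)
    (hSsq : ∀ t, S t * S t = P t)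
    -- P solves the Lyapunov differential equation Ṗ = A P + P Aᵀ + B Bᵀ (entrywise):
    (hP : ∀ t i j, HasDerivAt (fun τ => P τ i j)
      ((A t * P t + P t * (A t)ᵀ + B t * (B t)ᵀ) i j) t)
    -- S' is the derivative of t ↦ P(t)^{-1/2} = (S t)⁻¹ (entrywise):
    (S' : ℝ → Matrix (Fin n) (Fin n) ℝ)
    (hS' : ∀ t i j, HasDerivAt (fun τ => (S τ)⁻¹ i j) (S' t i j) t)
    (R F : ℝ → Matrix (Fin n) (Fin n) ℝ) (G : ℝ → Matrix (Fin n) (Fin p) ℝ)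
    (hR : ∀ t, R t = S' t * S t)
    (hF : ∀ t, F t = (S t)⁻¹ * A t * S t + R t)
    (hG : ∀ t, G t = (S t)⁻¹ * B t) :
    ∀ t, F t + (F t)ᵀ + G t * (G t)ᵀ = 0 := by
  intro t
  have hunit : ∀ τ, IsUnit (S τ).det := fun τ => (hSpos τ).isUnit.map detMonoidHom
  have hsymm : ∀ τ, (S τ)ᵀ = S τ := fun τ => isHermitian_iff_isSymm.mp (hSpos τ).isHermitian
  have hinv_symm : ∀ τ, ((S τ)⁻¹)ᵀ = (S τ)⁻¹ := fun τ => by rw [transpose_nonsing_inv, hsymm]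
  have hQPQ : ∀ τ, (S τ)⁻¹ * P τ * (S τ)⁻¹ = 1 := fun τ => by
    rw [← hSsq, ← mul_assoc, nonsing_inv_mul _ (hunit τ), one_mul, mul_nonsing_inv _ (hunit τ)]
  have hderiv_zero := eq_zero_of_hasDerivAt_apply_of_forall_eq hQPQ
    (hasDerivAt_mul_apply (hasDerivAt_mul_apply (hS' t) (hP t)) (hS' t))
  rw [← hSsq t] at hderiv_zero
  rw [hF, hG, hR]
  exact add_transpose_add_mul_transpose_eq_zero (hunit t) (hsymm t)
    (transpose_eq_of_hasDerivAt_apply hinv_symm (hS' t)) (by simpa only [add_mul] using hderiv_zero)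
end

section
/- Let F, G satisfy F + Fᵀ + G Gᵀ = 0, let Φ(t,s) be the transition matrix of ξ̇ = F(t)ξ (so ∂Φ/∂t = F(t)Φ, Φ(s,s)=I), and define M(t,s) = ∫ₛᵗ G(τ)ᵀ Φ(τ,s) dτ. Then Δ(t,s) := M(t,s)M(t,s)ᵀ + ∫ₛᵗ M(t,τ)G(τ)G(τ)ᵀM(t,τ)ᵀ dτ − ∫ₛᵗ (M(t,τ)G(τ) + G(τ)ᵀM(t,τ)ᵀ) dτ vanishes identically for all s ≤ t. -/
open Matrix intervalIntegral Set

/-!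
Uniqueness of solutions of the linear equation ξ̇ = F(t)ξ gives the cocycle identity
Φ(t,r)Φ(r,s) = Φ(t,s); hence Φ(t,s) = Φ(t,0)Φ(s,0)⁻¹ and ∂Φ(t,s)/∂s = -Φ(t,s)F(s), so that
∂M(t,s)/∂s = -M(t,s)F(s) - G(s)ᵀ. Differentiating Δ(t,s) in s then leaves
-M(F + Fᵀ + GGᵀ)Mᵀ = 0, and Δ(t,t) = 0.
-/

-- Any norm inducing the product topology would do; this one makes square matrices a complete
-- normed algebra, as `hasFDerivAt_ringInverse` requires.
attribute [local instance] Matrix.linftyOpNormedAddCommGroup Matrix.linftyOpNormedSpace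
  Matrix.linftyOpNormedRing Matrix.linftyOpNormedAlgebra

theorem ODE_solution_unique_linear {E : Type*} [NormedAddCommGroup E] [NormedSpace ℝ E]
    {A : ℝ → E →L[ℝ] E} (hA : Continuous A) {f g : ℝ → E}
    (hf : ∀ t, HasDerivAt f (A t (f t)) t) (hg : ∀ t, HasDerivAt g (A t (g t)) t)
    {t₀ : ℝ} (h : f t₀ = g t₀) : f = g := by
  funext t
  obtain ⟨a, b, ht, ht₀⟩ : ∃ a b, t ∈ Ioo a b ∧ t₀ ∈ Ioo a b :=
    ⟨min t t₀ - 1, max t t₀ + 1, by grind⟩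
  obtain ⟨K, hK⟩ := isCompact_Icc.exists_bound_of_continuousOn (hA.continuousOn (s := Icc a b))
  have hlip : ∀ τ ∈ Ioo a b, LipschitzOnWith K.toNNReal (A τ) univ := fun τ hτ =>
    ((A τ).lipschitz.weaken <| by
      simpa using Real.toNNReal_le_toNNReal (hK τ (Ioo_subset_Icc_self hτ))).lipschitzOnWith
  exact ODE_solution_unique_of_mem_Ioo hlip ht₀ (fun τ _ => ⟨hf τ, trivial⟩)
    (fun τ _ => ⟨hg τ, trivial⟩) h ht

namespace Matrix

variable {l m n : Type*}

theorem hasDerivAt_iff_apply [Fintype m] [Fintype n] {f : ℝ → Matrix m n ℝ} {f' : Matrix m n ℝ}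
    {x : ℝ} :
    HasDerivAt f f' x ↔ ∀ i j, HasDerivAt (fun t => f t i j) (f' i j) x := by
  refine hasDerivAt_iff_tendsto_slope.trans <| tendsto_pi_nhds.trans <| forall_congr' fun i =>
    tendsto_pi_nhds.trans <| forall_congr' fun j => ?_
  rw [hasDerivAt_iff_tendsto_slope]
  rfl

theorem _root_.HasDerivAt.matrix_mul [Fintype l] [Fintype m] [Fintype n] {f : ℝ → Matrix l m ℝ}
    {g : ℝ → Matrix m n ℝ} {f' : Matrix l m ℝ} {g' : Matrix m n ℝ} {x : ℝ}
    (hf : HasDerivAt f f' x) (hg : HasDerivAt g g' x) :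
    HasDerivAt (fun t => f t * g t) (f' * g x + f x * g') x := by
  rw [hasDerivAt_iff_apply] at *
  intro i j
  simp only [mul_apply, add_apply, ← Finset.sum_add_distrib]
  exact HasDerivAt.fun_sum fun k _ => (hf i k).mul (hg k j)

theorem _root_.HasDerivAt.matrix_transpose [Fintype m] [Fintype n] {f : ℝ → Matrix m n ℝ}
    {f' : Matrix m n ℝ} {x : ℝ} (hf : HasDerivAt f f' x) : HasDerivAt (fun t => (f t)ᵀ) f'ᵀ x :=
  hasDerivAt_iff_apply.2 fun i j => hasDerivAt_iff_apply.1 hf j i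

theorem hasDerivAt_of_integral_left [Fintype m] [Fintype n] {f : ℝ → Matrix m n ℝ}
    (hf : Continuous f) (b x : ℝ) :
    HasDerivAt (fun a => of fun i j => ∫ τ in a..b, f τ i j) (-f x) x :=
  hasDerivAt_iff_apply.2 fun i j =>
    have hfij := hf.matrix_elem i j
    integral_hasDerivAt_left (hfij.intervalIntegrable _ _) (hfij.stronglyMeasurableAtFilter _ _)
      hfij.continuousAt

theorem of_integral_mul_const [Fintype m] {f : ℝ → Matrix l m ℝ} (hf : Continuous f)
    (C : Matrix m n ℝ) (a b : ℝ) :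
    (of fun i j => ∫ τ in a..b, (f τ * C) i j) = (of fun i j => ∫ τ in a..b, f τ i j) * C := by
  ext i j
  simp only [of_apply, mul_apply]
  rw [integral_finsetSum (f := fun k τ => f τ i k * C k j)
    fun k _ => ((hf.matrix_elem i k).mul continuous_const).intervalIntegrable _ _]
  simp only [integral_mul_const]

end Matrix

section TransitionMatrix

variable {n : Type*} [Fintype n] [DecidableEq n] {F : ℝ → Matrix n n ℝ}
  {Φ : ℝ → ℝ → Matrix n n ℝ}

theorem transition_mul_transition (hF : Continuous F) (hΦ1 : ∀ s, Φ s s = 1)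
    (hΦ : ∀ s t, HasDerivAt (Φ · s) (F t * Φ t s) t) (t r s : ℝ) :
    Φ t r * Φ r s = Φ t s := by
  refine congrFun (ODE_solution_unique_linear ((ContinuousLinearMap.mul ℝ _).continuous.comp hF)
    (f := (Φ · r * Φ r s)) (fun t => ?_) (fun t => hΦ s t) (t₀ := r) (by simp [hΦ1])) t
  simpa only [Function.comp_apply, ContinuousLinearMap.mul_apply', mul_assoc]
    using (hΦ r t).mul_const (Φ r s)

theorem hasDerivAt_transition_right (hF : Continuous F) (hΦ1 : ∀ s, Φ s s = 1)
    (hΦ : ∀ s t, HasDerivAt (Φ · s) (F t * Φ t s) t) (t s : ℝ) :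
    HasDerivAt (Φ t) (-(Φ t s * F s)) s := by
  have hmul := transition_mul_transition hF hΦ1 hΦ
  let U : ℝ → (Matrix n n ℝ)ˣ := fun r => ⟨Φ r 0, Φ 0 r, by rw [hmul, hΦ1], by rw [hmul, hΦ1]⟩
  have hinv : ∀ r, Φ t r = Φ t 0 * Ring.inverse (Φ r 0) := fun r => by
    rw [show Φ r 0 = U r from rfl, Ring.inverse_unit, Units.inv_mk, hmul]
  have hd := ((hasFDerivAt_ringInverse (𝕜 := ℝ) (U s)).comp_hasDerivAt s (hΦ 0 s)).const_mul
    (Φ t 0)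
  refine (hd.congr_of_eventuallyEq (.of_forall hinv)).congr_deriv ?_
  change Φ t 0 * -(Φ 0 s * (F s * Φ s 0) * Φ 0 s) = _
  rw [mul_assoc, mul_assoc, hmul, hΦ1, mul_one, mul_neg, ← mul_assoc, hmul]

theorem hasDerivAt_integral_mul_transition_left {p : Type*} [Fintype p] {H : ℝ → Matrix p n ℝ}
    (hH : Continuous H) (hF : Continuous F) (hΦ1 : ∀ s, Φ s s = 1)
    (hΦ : ∀ s t, HasDerivAt (Φ · s) (F t * Φ t s) t) (t s : ℝ) :
    HasDerivAt (fun r => of fun i j => ∫ τ in r..t, (H τ * Φ τ r) i j)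
      (-((of fun i j => ∫ τ in s..t, (H τ * Φ τ s) i j) * F s) - H s) s := by
  have hmul := transition_mul_transition hF hΦ1 hΦ
  have hHΦ : Continuous fun τ => H τ * Φ τ 0 :=
    hH.matrix_mul (continuous_iff_continuousAt.2 fun τ => (hΦ 0 τ).continuousAt)
  have hsplit : ∀ r, (of fun i j => ∫ τ in r..t, (H τ * Φ τ r) i j)
      = (of fun i j => ∫ τ in r..t, (H τ * Φ τ 0) i j) * Φ 0 r := fun r => by
    simp only [← of_integral_mul_const hHΦ, Matrix.mul_assoc, hmul]
  simp only [hsplit]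
  convert (hasDerivAt_of_integral_left hHΦ t s).matrix_mul
    (hasDerivAt_transition_right hF hΦ1 hΦ 0 s) using 1
  rw [Matrix.neg_mul, Matrix.mul_assoc (H s), hmul, hΦ1, Matrix.mul_one, Matrix.mul_neg,
    ← Matrix.mul_assoc]
  abel

end TransitionMatrix

theorem hasDerivAt_covariance_defect {m n : Type*} [Fintype m] [Fintype n]
    {F : ℝ → Matrix n n ℝ} {G : ℝ → Matrix n m ℝ} {M : ℝ → Matrix m n ℝ} (hG : Continuous G)
    (hLyap : ∀ s, F s + (F s)ᵀ + G s * (G s)ᵀ = 0)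
    (hM : ∀ s, HasDerivAt M (-(M s * F s) - (G s)ᵀ) s) (t s : ℝ) :
    HasDerivAt (fun r => M r * (M r)ᵀ
        + (of fun i j => ∫ τ in r..t, (M τ * G τ * (G τ)ᵀ * (M τ)ᵀ) i j)
        - of fun i j => ∫ τ in r..t, (M τ * G τ + (G τ)ᵀ * (M τ)ᵀ) i j) 0 s := by
  have hMc : Continuous M := continuous_iff_continuousAt.2 fun s => (hM s).continuousAt
  have hquad : Continuous fun τ => M τ * G τ * (G τ)ᵀ * (M τ)ᵀ := by fun_prop
  have hlin : Continuous fun τ => M τ * G τ + (G τ)ᵀ * (M τ)ᵀ := by fun_prop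
  refine ((((hM s).matrix_mul (hM s).matrix_transpose).fun_add
    (hasDerivAt_of_integral_left hquad t s)).fun_sub
    (hasDerivAt_of_integral_left hlin t s)).congr_deriv ?_
  calc _ = -(M s * (F s + (F s)ᵀ + G s * (G s)ᵀ) * (M s)ᵀ) := by
        simp only [transpose_sub, transpose_neg, transpose_mul, transpose_transpose,
          Matrix.neg_mul, Matrix.mul_neg, Matrix.sub_mul, Matrix.mul_sub, Matrix.add_mul,
          Matrix.mul_add, Matrix.mul_assoc]
        abel
    _ = 0 := by rw [hLyap, Matrix.mul_zero, Matrix.zero_mul, neg_zero]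

theorem stmt_19 {n p : ℕ}
    (F : ℝ → Matrix (Fin n) (Fin n) ℝ) (G : ℝ → Matrix (Fin n) (Fin p) ℝ)
    (hFcont : ∀ i j, Continuous fun t => F t i j)
    (hGcont : ∀ i j, Continuous fun t => G t i j)
    (hLyap : ∀ t, F t + (F t)ᵀ + G t * (G t)ᵀ = 0)
    -- Φ is the transition matrix of ξ̇ = F(t) ξ:
    (Φ : ℝ → ℝ → Matrix (Fin n) (Fin n) ℝ)
    (hΦinit : ∀ s, Φ s s = 1)
    (hΦ : ∀ (s t : ℝ) (i j : Fin n), HasDerivAt (fun τ => Φ τ s i j) ((F t * Φ t s) i j) t)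
    -- M(t,s) = ∫ₛᵗ G(τ)ᵀ Φ(τ,s) dτ :
    (M : ℝ → ℝ → Matrix (Fin p) (Fin n) ℝ)
    (hM : ∀ t s, M t s = Matrix.of fun i j => ∫ τ in s..t, ((G τ)ᵀ * Φ τ s) i j)
    -- Δ(t,s) = M Mᵀ + ∫ₛᵗ M G Gᵀ Mᵀ dτ − ∫ₛᵗ (M G + Gᵀ Mᵀ) dτ :
    (Δ : ℝ → ℝ → Matrix (Fin p) (Fin p) ℝ)
    (hΔ : ∀ t s, Δ t s = M t s * (M t s)ᵀ
        + Matrix.of (fun i j => ∫ τ in s..t, (M t τ * G τ * (G τ)ᵀ * (M t τ)ᵀ) i j)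
        - Matrix.of (fun i j => ∫ τ in s..t, (M t τ * G τ + (G τ)ᵀ * (M t τ)ᵀ) i j)) :
    ∀ s t : ℝ, s ≤ t → Δ t s = 0 := by
  have hF : Continuous F := continuous_matrix hFcont
  have hΦ' : ∀ s t, HasDerivAt (Φ · s) (F t * Φ t s) t := fun s t =>
    hasDerivAt_iff_apply.2 (hΦ s t)
  intro s t _
  have hMt : ∀ r, HasDerivAt (M t) (-(M t r * F r) - (G r)ᵀ) r := fun r => by
    rw [funext (hM t)]
    exact hasDerivAt_integral_mul_transition_left (continuous_matrix hGcont).matrix_transpose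
      hF hΦinit hΦ' t r
  have hΔt : ∀ r, HasDerivAt (Δ t) 0 r := fun r => by
    rw [funext (hΔ t)]
    exact hasDerivAt_covariance_defect (continuous_matrix hGcont) hLyap hMt t r
  calc Δ t s = Δ t t := is_const_of_deriv_eq_zero (fun r => (hΔt r).differentiableAt)
        (fun r => (hΔt r).deriv) s t
    _ = 0 := by ext; simp [hΔ, hM, mul_apply]
end
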